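/- Let L be an abelian group and (A, m) an L-local integral domain (an L-graded domain with unique maximal homogeneous ideal m). Let I ⊆ A be a finitely generated homogeneous ideal such that for some prime ideal p of A containing m, the localized ideal I_p ⊆ A_p is principal generated by a nonzerodivisor (i.e., V(I) is a Cartier divisor at p). Then I is generated by a single homogeneous element of A. -/

import Mathlib

/-!
Over an `L`-local ring every homogeneous element outside `m` is a unit: a homogeneous non-unit
generates a proper homogeneous ideal, which lies in a maximal homogeneous ideal, that is, in `m`.
So if `u ∉ m` then some component `uₙ` of `u` is a unit, and for homogeneous `g` the product
`uₙ g` is a homogeneous component of `u g`. Hence a homogeneous ideal contains every homogeneous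
`g` whose image lies in its localization at `p ⊇ m`, and homogeneous ideals are determined by their
localizations at `p`. By Nakayama's lemma in `A_p`, the principal ideal `I_p` is generated by the
image of a single homogeneous element `f ∈ I`, and therefore `I = (f)`.
-/

variable {L A : Type*} [AddCommGroup L] [DecidableEq L] [CommRing A]

/-- A maximal homogeneous ideal of an `L`-graded ring. -/
def IsMaximalHomogeneousIdeal (𝒜 : L → AddSubgroup A) [GradedRing 𝒜] (m : Ideal A) : Prop :=
  Ideal.IsHomogeneous 𝒜 m ∧ m ≠ ⊤ ∧
    ∀ J : Ideal A, Ideal.IsHomogeneous 𝒜 J → m < J → J = ⊤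

theorem IsLocalRing.exists_span_singleton_eq_span_of_isPrincipal {R : Type*} [CommRing R]
    [IsLocalRing R] {T : Set R} (hT : T.Nonempty) (hP : (Ideal.span T).IsPrincipal) :
    ∃ y ∈ T, Ideal.span {y} = Ideal.span T := by
  obtain ⟨x, hx⟩ := hP.principal
  change Ideal.span T = Ideal.span {x} at hx
  by_cases h : T ⊆ maximalIdeal R * Ideal.span {x}
  · -- Nakayama: `(x) ⊆ 𝔪 (x)` forces `x = 0`, so every element of `T` vanishes.
    have hle : Ideal.span T ≤ maximalIdeal R * Ideal.span {x} := Ideal.span_le.2 h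
    rw [hx] at hle
    have hbot : Ideal.span T = ⊥ := hx ▸ Submodule.eq_bot_of_le_smul_of_le_jacobson_bot _ _
      (Submodule.fg_span_singleton x) hle (maximalIdeal_le_jacobson ⊥)
    obtain ⟨y, hyT⟩ := hT
    exact ⟨y, hyT,
      (eq_bot_mono (Ideal.span_mono (Set.singleton_subset_iff.2 hyT)) hbot).trans hbot.symm⟩
  · obtain ⟨y, hyT, hy⟩ := Set.not_subset.1 h
    obtain ⟨c, rfl⟩ := Ideal.mem_span_singleton'.1 (hx ▸ Ideal.subset_span hyT)
    have hc : IsUnit c := by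
      by_contra hc
      exact hy (Ideal.mul_mem_mul ((mem_maximalIdeal c).2 hc) (Ideal.mem_span_singleton_self x))
    exact ⟨c * x, hyT, by rw [Ideal.span_singleton_mul_left_unit hc, hx]⟩

section Graded

variable {ι σ R : Type*} [Semiring R] [SetLike σ R] [AddSubmonoidClass σ R] (𝒜 : ι → σ)
  [DecidableEq ι] [AddMonoid ι] [GradedRing 𝒜]

theorem HomogeneousIdeal.isCompactElement_top :
    IsCompactElement (⊤ : HomogeneousIdeal 𝒜) := by
  rw [CompleteLattice.isCompactElement_iff_le_of_directed_sSup_le]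
  intro s hne hdir htop
  have htop' : (⊤ : Ideal R) ≤ sSup (HomogeneousIdeal.toIdeal '' s) := by
    rw [sSup_image, ← HomogeneousIdeal.toIdeal_sSup, ← HomogeneousIdeal.toIdeal_top (𝒜 := 𝒜)]
    exact htop
  obtain ⟨_, ⟨I, hI, rfl⟩, hItop⟩ :=
    (CompleteLattice.isCompactElement_iff_le_of_directed_sSup_le _ _).1 Ideal.isCompactElement_top
      _ (hne.image _) (hdir.mono_comp fun _ _ h => h) htop'
  exact ⟨I, hI, hItop⟩

instance : IsCoatomic (HomogeneousIdeal 𝒜) :=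
  CompleteLattice.coatomic_of_top_compact (HomogeneousIdeal.isCompactElement_top 𝒜)

theorem Ideal.isHomogeneous_span_singleton {s : R} (hs : SetLike.IsHomogeneousElem 𝒜 s) :
    (Ideal.span {s}).IsHomogeneous 𝒜 :=
  Ideal.homogeneous_span 𝒜 {s} (by rintro _ rfl; exact hs)

theorem exists_decompose_notMem_of_notMem {J : Ideal R} {s : R} (hs : s ∉ J) :
    ∃ n, (DirectSum.decompose 𝒜 s n : R) ∉ J := by
  classical
  contrapose! hs
  rw [← DirectSum.sum_support_decompose 𝒜 s]
  exact Ideal.sum_mem _ fun n _ => hs n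

end Graded

variable {𝒜 : L → AddSubgroup A} [GradedRing 𝒜] {m : Ideal A}

theorem exists_isMaximalHomogeneousIdeal_le {J : Ideal A} (hJ : J.IsHomogeneous 𝒜)
    (hJtop : J ≠ ⊤) : ∃ M, IsMaximalHomogeneousIdeal 𝒜 M ∧ J ≤ M := by
  obtain h | ⟨M, hM, hJM⟩ := eq_top_or_exists_le_coatom (α := HomogeneousIdeal 𝒜) ⟨J, hJ⟩
  · exact absurd (congrArg HomogeneousIdeal.toIdeal h) hJtop
  refine ⟨M.toIdeal, ⟨M.isHomogeneous, fun h => hM.1 (HomogeneousIdeal.ext h), ?_⟩, hJM⟩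
  intro K hK hMK
  exact congrArg HomogeneousIdeal.toIdeal (hM.2 ⟨K, hK⟩ hMK)

theorem isUnit_of_isHomogeneousElem_of_notMem
    (huniq : ∀ m' : Ideal A, IsMaximalHomogeneousIdeal 𝒜 m' → m' = m)
    {s : A} (hs : SetLike.IsHomogeneousElem 𝒜 s) (hsm : s ∉ m) : IsUnit s := by
  by_contra h
  obtain ⟨M, hM, hsM⟩ := exists_isMaximalHomogeneousIdeal_le
    (Ideal.isHomogeneous_span_singleton 𝒜 hs) (Ideal.span_singleton_ne_top h)
  exact hsm (huniq M hM ▸ hsM (Ideal.mem_span_singleton_self s))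

theorem Ideal.IsHomogeneous.mem_of_mul_mem
    (huniq : ∀ m' : Ideal A, IsMaximalHomogeneousIdeal 𝒜 m' → m' = m)
    {J : Ideal A} (hJ : J.IsHomogeneous 𝒜) {u g : A} (hu : u ∉ m)
    (hg : SetLike.IsHomogeneousElem 𝒜 g) (hug : u * g ∈ J) : g ∈ J := by
  obtain ⟨n, hn⟩ := exists_decompose_notMem_of_notMem 𝒜 hu
  obtain ⟨d, hd⟩ := hg
  have hcomp : (DirectSum.decompose 𝒜 u n : A) * g ∈ J := by
    rw [← DirectSum.coe_decompose_mul_add_of_right_mem 𝒜 hd]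
    exact hJ _ hug
  exact (J.unit_mul_mem_iff_mem
    (isUnit_of_isHomogeneousElem_of_notMem huniq ⟨n, (DirectSum.decompose 𝒜 u n).2⟩ hn)).1 hcomp

theorem Ideal.IsHomogeneous.le_of_map_le_map
    (huniq : ∀ m' : Ideal A, IsMaximalHomogeneousIdeal 𝒜 m' → m' = m)
    {M : Submonoid A} (hM : ∀ u ∈ M, u ∉ m)
    (S : Type*) [CommRing S] [Algebra A S] [IsLocalization M S] {I J : Ideal A}
    (hI : I.IsHomogeneous 𝒜) (hJ : J.IsHomogeneous 𝒜)
    (hIJ : I.map (algebraMap A S) ≤ J.map (algebraMap A S)) : I ≤ J := by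
  intro r hr
  refine hJ.mem_iff.2 fun n => ?_
  obtain ⟨u, huM, hu⟩ := (IsLocalization.algebraMap_mem_map_algebraMap_iff M S J _).1
    (hIJ (Ideal.mem_map_of_mem _ (hI n hr)))
  exact hJ.mem_of_mul_mem huniq (hM u huM) ⟨n, (DirectSum.decompose 𝒜 r n).2⟩ hu

theorem homogeneous_ideal_principal_of_cartier_general (𝒜 : L → AddSubgroup A) [GradedRing 𝒜]
    (m : Ideal A)
    (huniq : ∀ m' : Ideal A, IsMaximalHomogeneousIdeal 𝒜 m' → m' = m)
    (I : Ideal A) (hIhom : Ideal.IsHomogeneous 𝒜 I)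
    (p : Ideal A) [p.IsPrime] (hmp : m ≤ p)
    (x : Localization.AtPrime p)
    (hx : Ideal.map (algebraMap A (Localization.AtPrime p)) I = Ideal.span {x}) :
    ∃ f : A, (∃ n : L, f ∈ 𝒜 n) ∧ I = Ideal.span {f} := by
  set φ := algebraMap A (Localization.AtPrime p)
  set T : Set A := (↑) '' ((↑) ⁻¹' (I : Set A) : Set {a // SetLike.IsHomogeneousElem 𝒜 a})
  have hT : Ideal.span T = I := hIhom.toIdeal_homogeneousCore_eq_self
  have hT0 : (0 : A) ∈ T := ⟨⟨0, 0, zero_mem _⟩, I.zero_mem, rfl⟩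
  have hP : (Ideal.span (φ '' T)).IsPrincipal := ⟨⟨x, by rw [← Ideal.map_span, hT, hx]⟩⟩
  obtain ⟨_, ⟨_, ⟨⟨f, hf⟩, hfI, rfl⟩, rfl⟩, hspan⟩ :=
    IsLocalRing.exists_span_singleton_eq_span_of_isPrincipal ⟨_, Set.mem_image_of_mem φ hT0⟩ hP
  have hmap : I.map φ = (Ideal.span {f}).map φ := by
    rw [Ideal.map_span, Set.image_singleton, hspan, ← Ideal.map_span, hT]
  refine ⟨f, hf, le_antisymm ?_ (Ideal.span_singleton_le_iff_mem _ |>.2 hfI)⟩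
  exact hIhom.le_of_map_le_map huniq (M := p.primeCompl) (fun u hu hum => hu (hmp hum)) _
    (Ideal.isHomogeneous_span_singleton 𝒜 hf) hmap.le

/-- Characterization of equivariant Cartier divisors: over an `L`-local integral domain
`(A, m)`, a finitely generated homogeneous ideal `I` which becomes principal, generated
by a nonzerodivisor, after localizing at some prime `p ⊇ m` is globally generated by a
single homogeneous element. -/
theorem homogeneous_ideal_principal_of_cartier (𝒜 : L → AddSubgroup A) [GradedRing 𝒜]
    [IsDomain A]
    (m : Ideal A) (hm : IsMaximalHomogeneousIdeal 𝒜 m)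
    (huniq : ∀ m' : Ideal A, IsMaximalHomogeneousIdeal 𝒜 m' → m' = m)
    (I : Ideal A) (hIfg : I.FG) (hIhom : Ideal.IsHomogeneous 𝒜 I)
    (p : Ideal A) [p.IsPrime] (hmp : m ≤ p)
    (x : Localization.AtPrime p)
    (hx : Ideal.map (algebraMap A (Localization.AtPrime p)) I = Ideal.span {x})
    (hxnzd : x ∈ nonZeroDivisors (Localization.AtPrime p)) :
    ∃ f : A, (∃ n : L, f ∈ 𝒜 n) ∧ I = Ideal.span {f} :=
  homogeneous_ideal_principal_of_cartier_general 𝒜 m huniq I hIhom p hmp x hx
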